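/- Suppose W : ℝ → ℝ is bounded, piecewise C², satisfies boundary conditions lim_{ξ→-∞} W(ξ) = A, lim_{ξ→+∞} W(ξ) = B, and the equation (W-c)²/2 + K∗W = α holds on ℝ∖{0} for constants c, α ∈ ℝ, with K(x) = (1/2)e^{-|x|}. Then (A-c)²/2 + A = α = (B-c)²/2 + B; consequently either A = B or c = 1 + (A+B)/2. -/

import Mathlib

/-! Along `ξ → ±∞` the convolution `K ∗ W` tends to `(∫ K) · lim W` by dominated convergence,
since `W` is bounded and `K` is integrable; as `∫ K = 1`, passing to the limit in the equation
gives `(A - c)²/2 + A = α = (B - c)²/2 + B`. Subtracting the two identities factors as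
`(A - B)(A + B - 2c + 2) = 0`. -/

open MeasureTheory Real Filter

lemma integral_exp_neg_abs : ∫ x : ℝ, exp (-|x|) = 2 := by
  rw [integral_comp_abs (f := fun x => exp (-x)), integral_exp_neg_Ioi_zero]
  norm_num

-- A non-integrable function would have integral `0`.
lemma integrable_exp_neg_abs : Integrable fun x : ℝ => exp (-|x|) :=
  .of_integral_ne_zero (by rw [integral_exp_neg_abs]; norm_num)

lemma integral_half_exp_neg_abs : ∫ x : ℝ, 1 / 2 * exp (-|x|) = 1 := by
  rw [integral_const_mul, integral_exp_neg_abs]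
  norm_num

lemma tendsto_integral_mul_comp_sub {k W : ℝ → ℝ} (hk : Integrable k) (hW : Measurable W)
    {C : ℝ} (hC : ∀ x, |W x| ≤ C) {l : Filter ℝ} [l.IsCountablyGenerated]
    (hl : ∀ u, Tendsto (fun ξ => ξ - u) l l) {L : ℝ} (hWL : Tendsto W l (nhds L)) :
    Tendsto (fun ξ => ∫ u, k u * W (ξ - u)) l (nhds ((∫ u, k u) * L)) := by
  rw [← integral_mul_const]
  refine tendsto_integral_filter_of_dominated_convergence (fun u => C * ‖k u‖) ?_ ?_
    (hk.norm.const_mul C) (ae_of_all _ fun u => tendsto_const_nhds.mul (hWL.comp (hl u)))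
  · exact .of_forall fun ξ =>
      hk.aestronglyMeasurable.mul (hW.comp (measurable_const.sub measurable_id)).aestronglyMeasurable
  · refine .of_forall fun ξ => ae_of_all _ fun u => ?_
    rw [norm_mul, mul_comm C, Real.norm_eq_abs (W _)]
    exact mul_le_mul_of_nonneg_left (hC _) (norm_nonneg _)

lemma boundary_value_eq {W K : ℝ → ℝ} (hK : ∀ x, K x = 1 / 2 * exp (-|x|)) (hW : Measurable W)
    {C : ℝ} (hC : ∀ x, |W x| ≤ C) {l : Filter ℝ} [l.NeBot] [l.IsCountablyGenerated]
    (hl : ∀ u, Tendsto (fun ξ => ξ - u) l l) (hl0 : ∀ᶠ ξ in l, ξ ≠ 0)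
    {L c α : ℝ} (hWL : Tendsto W l (nhds L))
    (heq : ∀ ξ, ξ ≠ 0 → (W ξ - c) ^ 2 / 2 + (∫ y, K (ξ - y) * W y) = α) :
    (L - c) ^ 2 / 2 + L = α := by
  have hconv : ∀ ξ, ∫ y, K (ξ - y) * W y = ∫ u, 1 / 2 * exp (-|u|) * W (ξ - u) := fun ξ => by
    rw [← integral_sub_left_eq_self _ volume ξ]
    simp only [hK, sub_sub_cancel]
  have hKW : Tendsto (fun ξ => ∫ y, K (ξ - y) * W y) l (nhds L) := by
    simpa only [hconv, integral_half_exp_neg_abs, one_mul] using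
      tendsto_integral_mul_comp_sub (integrable_exp_neg_abs.const_mul (1 / 2)) hW hC hl hWL
  have hlim := (((hWL.sub_const c).pow 2).div_const 2).add hKW
  exact tendsto_nhds_unique (hlim.congr' (hl0.mono heq)) tendsto_const_nhds

lemma eq_or_eq_of_half_sq_add_eq {A B c : ℝ} (h : (A - c) ^ 2 / 2 + A = (B - c) ^ 2 / 2 + B) :
    A = B ∨ c = 1 + (A + B) / 2 := by
  have hfactor : (A - B) * (A + B - 2 * c + 2) = 0 := by linear_combination 2 * h
  rcases mul_eq_zero.mp hfactor with h | h
  · exact .inl (sub_eq_zero.mp h)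
  · exact .inr (by linarith)

/-- Suppose `W : ℝ → ℝ` is bounded and measurable with `W(ξ) → A` as `ξ → -∞` and
`W(ξ) → B` as `ξ → +∞`, and `(W-c)²/2 + K∗W = α` holds on `ℝ∖{0}`, where
`K(x) = (1/2)e^{-|x|}`. Then `(A-c)²/2 + A = α = (B-c)²/2 + B`; consequently
either `A = B` or `c = 1 + (A+B)/2`. -/
theorem boundary_values_relation (W K : ℝ → ℝ)
    (hK : ∀ x, K x = (1 / 2) * Real.exp (-|x|))
    (hWmeas : Measurable W) (hWbd : ∃ C, ∀ x, |W x| ≤ C)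
    (A B c α : ℝ)
    (hA : Tendsto W atBot (nhds A)) (hB : Tendsto W atTop (nhds B))
    (heq : ∀ ξ : ℝ, ξ ≠ 0 →
      (W ξ - c) ^ 2 / 2 + (∫ y : ℝ, K (ξ - y) * W y) = α) :
    ((A - c) ^ 2 / 2 + A = α ∧ (B - c) ^ 2 / 2 + B = α) ∧
      (A = B ∨ c = 1 + (A + B) / 2) := by
  obtain ⟨C, hC⟩ := hWbd
  have hAα : (A - c) ^ 2 / 2 + A = α :=
    boundary_value_eq hK hWmeas hC (fun u => tendsto_atBot_add_const_right _ (-u) tendsto_id)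
      (eventually_lt_atBot 0 |>.mono fun _ => ne_of_lt) hA heq
  have hBα : (B - c) ^ 2 / 2 + B = α :=
    boundary_value_eq hK hWmeas hC (fun u => tendsto_atTop_add_const_right _ (-u) tendsto_id)
      (eventually_gt_atTop 0 |>.mono fun _ => ne_of_gt) hB heq
  exact ⟨⟨hAα, hBα⟩, eq_or_eq_of_half_sq_add_eq (hAα.trans hBα.symm)⟩
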